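/- arXiv:2502.07334 — 2 statements merged into one kernel-verified Lean document; each statement's English description precedes it below -/
import Mathlib

section
/- Let f : X → X be a minimal equicontinuous homeomorphism of a totally disconnected compact metric space X. Then X is a periodic orbit or f is topologically conjugate to an odometer. -/
/-!
For `δ > 0` call two points `δ`-chained when they are joined by finitely many points whose
consecutive forward orbits stay `δ`-close. This is an `f`-invariant equivalence relation, and
equicontinuity makes its classes open, hence clopen. By minimality the orbit of a point `x₀` meets
every class and `f` permutes the classes cyclically: each `x` lies in the class of `f^i x₀` for a
unique `i` below the first return time `m(δ)` of `x₀` to its own class. Smaller `δ` refines the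
classes, so `m(δ) ∣ m(δ')` for `δ' ≤ δ`, and total disconnectedness makes the classes separate
points as `δ → 0`. If `X` is finite the classes are eventually singletons and `X` is the periodic
orbit of `x₀`. Otherwise `m(δ) → ∞`, and recording the class index of `x` along a decreasing
sequence of scales is a conjugacy of `f` with the odometer of the return times.
-/

open Filter Topology Metric Set

/-- A periodic structure: a sequence of positive integers with `m j ∣ m (j+1)` and `m j → ∞`. -/
structure PeriodicStructure where
  m : ℕ → ℕ
  pos : ∀ j, 0 < m j
  dvd : ∀ j, m j ∣ m (j + 1)
  tendsto : Filter.Tendsto m Filter.atTop Filter.atTop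

/-- The odometer space `X_m` of a periodic structure. -/
def PeriodicStructure.space (p : PeriodicStructure) : Type :=
  {x : ℕ → ℕ // ∀ j, x j < p.m j ∧ x (j + 1) % p.m j = x j}

instance (p : PeriodicStructure) : TopologicalSpace p.space :=
  inferInstanceAs (TopologicalSpace
    {x : ℕ → ℕ // ∀ j, x j < p.m j ∧ x (j + 1) % p.m j = x j})

/-- The odometer map `g_m` (adding 1 coordinatewise mod `m j`). -/
def PeriodicStructure.step (p : PeriodicStructure) (x : p.space) : p.space :=
  ⟨fun j => (x.1 j + 1) % p.m j, by
    intro j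
    refine ⟨Nat.mod_lt _ (p.pos j), ?_⟩
    show (x.1 (j + 1) + 1) % p.m (j + 1) % p.m j = (x.1 j + 1) % p.m j
    rw [Nat.mod_mod_of_dvd _ (p.dvd j), ← (x.2 j).2, Nat.add_mod]
    exact Nat.add_mod_mod _ _ _⟩

/-- `S` is an odometer for `f`: `f` restricted to `S` is topologically conjugate to
an odometer `g_m : X_m → X_m`. -/
def IsOdometer {X : Type*} [TopologicalSpace X] (f : X → X) (S : Set X) : Prop :=
  ∃ p : PeriodicStructure, ∃ h : p.space ≃ₜ S,
    ∀ z : p.space, f ((h z : X)) = ((h (p.step z) : X))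

/-- `S` is a periodic orbit of `f`. -/
def IsPeriodicOrbit {X : Type*} (f : X → X) (S : Set X) : Prop :=
  ∃ x ∈ S, ∃ i : ℕ, 0 < i ∧ f^[i] x = x ∧ S = {y | ∃ j < i, f^[j] x = y}

/-- The ω-limit set of a sequence of points. -/
def omegaLimitSeq {X : Type*} [TopologicalSpace X] (x : ℕ → X) : Set X :=
  {y | ∃ φ : ℕ → ℕ, StrictMono φ ∧
    Filter.Tendsto (fun j => x (φ j)) Filter.atTop (nhds y)}

/-- The ω-limit set `ω(x, f)` of a point. -/
def omegaLimitPt {X : Type*} [TopologicalSpace X] (f : X → X) (x : X) : Set X :=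
  omegaLimitSeq fun i => f^[i] x

/-- `M` is a minimal set for `f`. -/
def IsMinimalSet {X : Type*} [TopologicalSpace X] (f : X → X) (M : Set X) : Prop :=
  M.Nonempty ∧ IsClosed M ∧ Set.MapsTo f M M ∧
    ∀ S ⊆ M, IsClosed S → Set.MapsTo f S S → S = ∅ ∨ S = M

/-- `x` is a minimal point for `f`. -/
def IsMinimalPoint {X : Type*} [TopologicalSpace X] (f : X → X) (x : X) : Prop :=
  IsMinimalSet f (closure (Set.range fun i => f^[i] x))

/-- `x` is a regularly recurrent point for `f`. -/
def RegularlyRecurrent {X : Type*} [PseudoMetricSpace X] (f : X → X) (x : X) : Prop :=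
  ∀ ε > 0, ∃ n : ℕ, 0 < n ∧ ∀ k : ℕ, dist x (f^[k * n] x) ≤ ε

/-- `f` has the shadowing property. -/
def ShadowingProperty {X : Type*} [PseudoMetricSpace X] (f : X → X) : Prop :=
  ∀ ε > 0, ∃ δ > 0, ∀ ξ : ℕ → X,
    (∀ i, dist (f (ξ i)) (ξ (i + 1)) ≤ δ) → ∃ y, ∀ i, dist (f^[i] y) (ξ i) ≤ ε

open Function

theorem IsMinimalSet.eq_univ_of_isClosed {α : Type*} [TopologicalSpace α] {f : α → α}
    (hmin : IsMinimalSet f univ) {S : Set α} (hS : IsClosed S) (hfS : MapsTo f S S)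
    (hne : S.Nonempty) : S = univ :=
  (hmin.2.2.2 S (subset_univ S) hS hfS).resolve_left hne.ne_empty

instance (p : PeriodicStructure) : T2Space p.space :=
  inferInstanceAs (T2Space {x : ℕ → ℕ // ∀ j, x j < p.m j ∧ x (j + 1) % p.m j = x j})

theorem isOdometer_univ_of_semiconj {Y : Type*} [TopologicalSpace Y] [CompactSpace Y]
    {g : Y → Y} {p : PeriodicStructure} (Φ : Y → p.space) (hc : Continuous Φ)
    (hb : Bijective Φ) (hΦ : Semiconj Φ g p.step) : IsOdometer g univ := by
  let e : Y ≃ₜ p.space :=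
    (show Continuous (Equiv.ofBijective Φ hb) from hc).homeoOfEquivCompactToT2
  refine ⟨p, e.symm.trans (Homeomorph.Set.univ Y).symm, fun z => ?_⟩
  change g (e.symm z) = e.symm (p.step z)
  rw [e.eq_symm_apply]
  change Φ (g (e.symm z)) = p.step z
  rw [hΦ.eq, show Φ (e.symm z) = z from e.apply_symm_apply z]

section

variable {X : Type*} [MetricSpace X] {f : X → X} {δ δ' : ℝ} {x₀ x y z : X} {i j n : ℕ}

def OrbitChain (f : X → X) (δ : ℝ) : X → X → Prop :=
  Relation.ReflTransGen fun a b => ∀ n, dist (f^[n] a) (f^[n] b) ≤ δ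

namespace OrbitChain

theorem refl (x : X) : OrbitChain f δ x x := Relation.ReflTransGen.refl

theorem trans (hxy : OrbitChain f δ x y) (hyz : OrbitChain f δ y z) : OrbitChain f δ x z :=
  Relation.ReflTransGen.trans hxy hyz

theorem symm (h : OrbitChain f δ x y) : OrbitChain f δ y x := by
  induction h with
  | refl => exact refl x
  | tail _ hbc ih =>
    exact (Relation.ReflTransGen.single fun n => (dist_comm _ _).trans_le (hbc n)).trans ih

theorem mono (hδ : δ ≤ δ') (h : OrbitChain f δ x y) : OrbitChain f δ' x y :=
  Relation.ReflTransGen.mono (fun _ _ hab n => (hab n).trans hδ) _ _ h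

theorem iterate (h : OrbitChain f δ x y) (k : ℕ) : OrbitChain f δ (f^[k] x) (f^[k] y) :=
  Relation.ReflTransGen.lift _
    (fun a b hab n => by simpa only [← iterate_add_apply] using hab (n + k)) _ _ h

end OrbitChain

theorem orbitChain_iterate_mod (h : OrbitChain f δ x₀ (f^[n] x₀)) (k : ℕ) :
    OrbitChain f δ (f^[k] x₀) (f^[k % n] x₀) := by
  have key : ∀ q r, OrbitChain f δ (f^[r + n * q] x₀) (f^[r] x₀) := by
    intro q r
    induction q with
    | zero => exact .refl _
    | succ q ih =>
      rw [Nat.mul_succ, ← add_assoc, iterate_add_apply]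
      exact (h.symm.iterate _).trans ih
  simpa only [Nat.mod_add_div] using key (k / n) (k % n)

theorem eventually_orbitChain (hu : EquicontinuousAt (fun n : ℕ => f^[n]) x) (hδ : 0 < δ) :
    ∀ᶠ y in 𝓝 x, OrbitChain f δ x y :=
  (Metric.equicontinuousAt_iff_right.1 hu δ hδ).mono fun _ hy =>
    Relation.ReflTransGen.single fun n => (hy n).le

theorem isClosed_of_forall_orbitChain (hu : Equicontinuous fun n : ℕ => f^[n]) (hδ : 0 < δ)
    {S : Set X} (hS : ∀ y ∈ S, ∀ z, OrbitChain f δ y z → z ∈ S) : IsClosed S :=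
  isOpen_compl_iff.1 <| isOpen_iff_mem_nhds.2 fun y hy =>
    (eventually_orbitChain (hu y) hδ).mono fun z hyz hz => hy (hS z hz y hyz.symm)

theorem exists_orbitChain_iterate (hu : Equicontinuous fun n : ℕ => f^[n])
    (hmin : IsMinimalSet f univ) (hδ : 0 < δ) (x₀ x : X) :
    ∃ k, OrbitChain f δ (f^[k] x₀) x := by
  let U := {y | ∃ k, OrbitChain f δ (f^[k] x₀) y}
  have hU : IsClosed U :=
    isClosed_of_forall_orbitChain hu hδ fun y ⟨k, hk⟩ z hyz => ⟨k, hk.trans hyz⟩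
  have hfU : MapsTo f U U := fun y ⟨k, hk⟩ =>
    ⟨k + 1, by simpa [iterate_succ_apply'] using hk.iterate 1⟩
  exact eq_univ_iff_forall.1 (hmin.eq_univ_of_isClosed hU hfU ⟨x₀, 0, .refl _⟩) x

/-- The first return time of `x₀` to its own class (`0` if there is none). -/
noncomputable def returnTime (f : X → X) (δ : ℝ) (x₀ : X) : ℕ :=
  sInf {n | 0 < n ∧ OrbitChain f δ x₀ (f^[n] x₀)}

/-- The `i < returnTime f δ x₀` with `x` in the class of `f^[i] x₀`. -/
noncomputable def orbitIndex (f : X → X) (δ : ℝ) (x₀ x : X) : ℕ :=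
  sInf {i | OrbitChain f δ (f^[i] x₀) x}

theorem orbitChain_iterate_returnTime (h : 0 < returnTime f δ x₀) :
    OrbitChain f δ x₀ (f^[returnTime f δ x₀] x₀) :=
  (Nat.sInf_mem (Nat.nonempty_of_pos_sInf h)).2

theorem returnTime_pos (hu : Equicontinuous fun n : ℕ => f^[n]) (hmin : IsMinimalSet f univ)
    (hδ : 0 < δ) (x₀ : X) : 0 < returnTime f δ x₀ := by
  obtain ⟨k, hk⟩ := exists_orbitChain_iterate hu hmin hδ (f x₀) x₀
  have hret : k + 1 ∈ {n | 0 < n ∧ OrbitChain f δ x₀ (f^[n] x₀)} :=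
    ⟨k.succ_pos, by rw [iterate_succ_apply]; exact hk.symm⟩
  exact (Nat.sInf_mem ⟨_, hret⟩).1

theorem eq_of_orbitChain_iterate (hi : i < returnTime f δ x₀) (hj : j < returnTime f δ x₀)
    (h : OrbitChain f δ (f^[i] x₀) (f^[j] x₀)) : i = j := by
  wlog hij : i < j generalizing i j
  · rcases (not_lt.1 hij).eq_or_lt with rfl | hji
    · rfl
    · exact (this hj hi h.symm hji).symm
  set m := returnTime f δ x₀
  have hret : OrbitChain f δ (f^[m - j + i] x₀) (f^[m] x₀) := by
    have := h.iterate (m - j)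
    rwa [← iterate_add_apply, ← iterate_add_apply, Nat.sub_add_cancel hj.le] at this
  have hearly : OrbitChain f δ x₀ (f^[m - j + i] x₀) :=
    (hret.trans (orbitChain_iterate_returnTime (by omega)).symm).symm
  exact (Nat.notMem_of_lt_sInf (show m - j + i < m by omega) ⟨by omega, hearly⟩).elim

theorem orbitIndex_congr (h : OrbitChain f δ x y) : orbitIndex f δ x₀ x = orbitIndex f δ x₀ y := by
  unfold orbitIndex
  congr 1
  ext i
  exact ⟨fun hi => hi.trans h, fun hi => hi.trans h.symm⟩

theorem orbitChain_orbitIndex (hu : Equicontinuous fun n : ℕ => f^[n])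
    (hmin : IsMinimalSet f univ) (hδ : 0 < δ) (x₀ x : X) :
    OrbitChain f δ (f^[orbitIndex f δ x₀ x] x₀) x :=
  Nat.sInf_mem (exists_orbitChain_iterate hu hmin hδ x₀ x)

theorem orbitIndex_lt_returnTime (hu : Equicontinuous fun n : ℕ => f^[n])
    (hmin : IsMinimalSet f univ) (hδ : 0 < δ) (x₀ x : X) :
    orbitIndex f δ x₀ x < returnTime f δ x₀ := by
  obtain ⟨k, hk⟩ := exists_orbitChain_iterate hu hmin hδ x₀ x
  have hm := returnTime_pos hu hmin hδ x₀
  have hmod := orbitChain_iterate_mod (orbitChain_iterate_returnTime hm) k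
  exact (Nat.sInf_le (hmod.symm.trans hk)).trans_lt (Nat.mod_lt _ hm)

theorem orbitIndex_eq_of_orbitChain (hu : Equicontinuous fun n : ℕ => f^[n]) (hmin : IsMinimalSet f univ)
    (hδ : 0 < δ) (hi : i < returnTime f δ x₀) (h : OrbitChain f δ (f^[i] x₀) x) :
    orbitIndex f δ x₀ x = i :=
  eq_of_orbitChain_iterate (orbitIndex_lt_returnTime hu hmin hδ x₀ x) hi
    ((orbitChain_orbitIndex hu hmin hδ x₀ x).trans h.symm)

theorem orbitChain_of_orbitIndex_eq (hu : Equicontinuous fun n : ℕ => f^[n])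
    (hmin : IsMinimalSet f univ) (hδ : 0 < δ) (h : orbitIndex f δ x₀ x = orbitIndex f δ x₀ y) :
    OrbitChain f δ x y := by
  have hy := orbitChain_orbitIndex hu hmin hδ x₀ y
  rw [← h] at hy
  exact (orbitChain_orbitIndex hu hmin hδ x₀ x).symm.trans hy

theorem orbitIndex_apply (hu : Equicontinuous fun n : ℕ => f^[n]) (hmin : IsMinimalSet f univ)
    (hδ : 0 < δ) (x₀ x : X) :
    orbitIndex f δ x₀ (f x) = (orbitIndex f δ x₀ x + 1) % returnTime f δ x₀ := by
  have hm := returnTime_pos hu hmin hδ x₀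
  have hx : OrbitChain f δ (f^[orbitIndex f δ x₀ x + 1] x₀) (f x) := by
    simpa [iterate_succ_apply'] using (orbitChain_orbitIndex hu hmin hδ x₀ x).iterate 1
  exact orbitIndex_eq_of_orbitChain hu hmin hδ (Nat.mod_lt _ hm)
    ((orbitChain_iterate_mod (orbitChain_iterate_returnTime hm) _).symm.trans hx)

theorem orbitIndex_mod_returnTime (hu : Equicontinuous fun n : ℕ => f^[n])
    (hmin : IsMinimalSet f univ) (hδ' : 0 < δ') (hδδ' : δ' ≤ δ) (x₀ x : X) :
    orbitIndex f δ' x₀ x % returnTime f δ x₀ = orbitIndex f δ x₀ x := by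
  have hδ := hδ'.trans_le hδδ'
  have hm := returnTime_pos hu hmin hδ x₀
  refine (orbitIndex_eq_of_orbitChain hu hmin hδ (Nat.mod_lt _ hm) ?_).symm
  exact (orbitChain_iterate_mod (orbitChain_iterate_returnTime hm) _).symm.trans
    ((orbitChain_orbitIndex hu hmin hδ' x₀ x).mono hδδ')

theorem returnTime_dvd (hu : Equicontinuous fun n : ℕ => f^[n]) (hmin : IsMinimalSet f univ)
    (hδ' : 0 < δ') (hδδ' : δ' ≤ δ) (x₀ : X) : returnTime f δ x₀ ∣ returnTime f δ' x₀ := by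
  have hm := returnTime_pos hu hmin (hδ'.trans_le hδδ') x₀
  have h := ((orbitChain_iterate_returnTime (returnTime_pos hu hmin hδ' x₀)).mono hδδ').trans
    (orbitChain_iterate_mod (orbitChain_iterate_returnTime hm) _)
  exact Nat.dvd_of_mod_eq_zero (eq_of_orbitChain_iterate hm (Nat.mod_lt _ hm) h).symm

theorem isLocallyConstant_orbitIndex (hu : Equicontinuous fun n : ℕ => f^[n]) (hδ : 0 < δ)
    (x₀ : X) : IsLocallyConstant (orbitIndex f δ x₀) :=
  (IsLocallyConstant.iff_eventually_eq _).2 fun x =>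
    (eventually_orbitChain (hu x) hδ).mono fun _ h => (orbitIndex_congr h).symm

theorem card_le_returnTime (hu : Equicontinuous fun n : ℕ => f^[n]) (hmin : IsMinimalSet f univ)
    (hδ : 0 < δ) (x₀ : X) {s : Finset X} (hs : ∀ x ∈ s, ∀ y ∈ s, OrbitChain f δ x y → x = y) :
    s.card ≤ returnTime f δ x₀ := by
  simpa using Finset.card_le_card_of_injOn (orbitIndex f δ x₀)
    (fun x _ => Finset.mem_range.2 (orbitIndex_lt_returnTime hu hmin hδ x₀ x))
    (fun x hx y hy h => hs x hx y hy (orbitChain_of_orbitIndex_eq hu hmin hδ h))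

theorem eventually_forall_orbitChain_mem [CompactSpace X] {V : Set X} (hV : IsClopen V)
    (hx : x ∈ V) : ∀ᶠ δ in 𝓝 0, ∀ y, OrbitChain f δ x y → y ∈ V := by
  obtain ⟨η, hη, hηV⟩ := hV.isClosed.isCompact.exists_thickening_subset_open hV.isOpen subset_rfl
  filter_upwards [eventually_lt_nhds hη] with δ hδ y hy
  induction hy with
  | refl => exact hx
  | tail _ hbc hb =>
    exact hηV (mem_thickening_iff.2 ⟨_, hb, ((dist_comm _ _).trans_le (hbc 0)).trans_lt hδ⟩)

theorem eventually_not_orbitChain [CompactSpace X] [TotallyDisconnectedSpace X] (hxy : x ≠ y) :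
    ∀ᶠ δ in 𝓝 0, ¬OrbitChain f δ x y := by
  obtain ⟨V, hV, hxV, hyV⟩ := exists_isClopen_of_totally_separated hxy
  exact (eventually_forall_orbitChain_mem hV hxV).mono fun _ h hxy => hyV (h y hxy)

theorem eventually_forall_orbitChain_imp_eq [CompactSpace X] [TotallyDisconnectedSpace X]
    {s : Set X} (hs : s.Finite) : ∀ᶠ δ in 𝓝 0, ∀ x ∈ s, ∀ y ∈ s, OrbitChain f δ x y → x = y := by
  simp only [hs.eventually_all]
  intro x _ y _
  by_cases hxy : x = y
  · exact .of_forall fun _ _ => hxy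
  · exact (eventually_not_orbitChain hxy).mono fun _ h h' => (h h').elim

theorem eventually_le_returnTime [CompactSpace X] [TotallyDisconnectedSpace X] [Infinite X]
    (hu : Equicontinuous fun n : ℕ => f^[n]) (hmin : IsMinimalSet f univ) (x₀ : X) (N : ℕ) :
    ∀ᶠ δ in 𝓝[>] 0, N ≤ returnTime f δ x₀ := by
  obtain ⟨s, rfl⟩ := Infinite.exists_subset_card_eq X N
  filter_upwards [(eventually_forall_orbitChain_imp_eq s.finite_toSet).filter_mono
    nhdsWithin_le_nhds, self_mem_nhdsWithin] with δ hs hδ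
  exact card_le_returnTime hu hmin hδ x₀ hs

theorem exists_antitone_scales [CompactSpace X] [TotallyDisconnectedSpace X] [Infinite X]
    (hu : Equicontinuous fun n : ℕ => f^[n]) (hmin : IsMinimalSet f univ) (x₀ : X) :
    ∃ δ : ℕ → ℝ, Antitone δ ∧ (∀ j, 0 < δ j) ∧ Tendsto δ atTop (𝓝 0) ∧
      ∀ j, j ≤ returnTime f (δ j) x₀ := by
  have hlim : Tendsto (fun k : ℕ => 1 / ((k : ℝ) + 1)) atTop (𝓝[>] 0) :=
    tendsto_nhdsWithin_iff.2
      ⟨tendsto_one_div_add_atTop_nhds_zero_nat, .of_forall fun k => mem_Ioi.2 (by positivity)⟩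
  obtain ⟨φ, hφ, hφN⟩ := extraction_forall_of_eventually fun N =>
    hlim.eventually (eventually_le_returnTime hu hmin x₀ N)
  refine ⟨fun j => 1 / ((φ j : ℝ) + 1), fun i j hij => ?_, fun j => by positivity,
    tendsto_one_div_add_atTop_nhds_zero_nat.comp hφ.tendsto_atTop, hφN⟩
  exact Nat.one_div_le_one_div (hφ.monotone hij)

theorem exists_forall_orbitIndex_eq [CompactSpace X] (hu : Equicontinuous fun n : ℕ => f^[n])
    (hmin : IsMinimalSet f univ) {δ : ℕ → ℝ} (hδ : ∀ j, 0 < δ j) (hanti : Antitone δ) (x₀ : X)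
    {a : ℕ → ℕ} (ha : ∀ j, a j < returnTime f (δ j) x₀ ∧ a (j + 1) % returnTime f (δ j) x₀ = a j) :
    ∃ x, ∀ j, orbitIndex f (δ j) x₀ x = a j := by
  let K j := {x | OrbitChain f (δ j) (f^[a j] x₀) x}
  have hK j : IsClosed (K j) :=
    isClosed_of_forall_orbitChain hu (hδ j) fun _ hy _ hyz => hy.trans hyz
  have hKsucc j : K (j + 1) ⊆ K j := fun x hx => by
    have hm := returnTime_pos hu hmin (hδ j) x₀
    have := (orbitChain_iterate_mod (orbitChain_iterate_returnTime hm) (a (j + 1))).symm.trans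
      (hx.mono (hanti j.le_succ))
    rwa [(ha j).2] at this
  obtain ⟨x, hx⟩ := IsCompact.nonempty_iInter_of_sequence_nonempty_isCompact_isClosed K hKsucc
    (fun j => ⟨_, .refl _⟩) (hK 0).isCompact hK
  exact ⟨x, fun j => orbitIndex_eq_of_orbitChain hu hmin (hδ j) (ha j).1 (mem_iInter.1 hx j)⟩

theorem isOdometer_univ [CompactSpace X] [TotallyDisconnectedSpace X] [Infinite X]
    (hu : Equicontinuous fun n : ℕ => f^[n]) (hmin : IsMinimalSet f univ) :
    IsOdometer f univ := by
  obtain ⟨x₀, -⟩ := hmin.1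
  obtain ⟨δ, hanti, hδ, hlim, hN⟩ := exists_antitone_scales hu hmin x₀
  let p : PeriodicStructure :=
    { m := fun j => returnTime f (δ j) x₀
      pos := fun j => returnTime_pos hu hmin (hδ j) x₀
      dvd := fun j => returnTime_dvd hu hmin (hδ (j + 1)) (hanti j.le_succ) x₀
      tendsto := tendsto_atTop_mono hN tendsto_id }
  let Φ : X → p.space := fun x => ⟨fun j => orbitIndex f (δ j) x₀ x, fun j =>
    ⟨orbitIndex_lt_returnTime hu hmin (hδ j) x₀ x,
      orbitIndex_mod_returnTime hu hmin (hδ (j + 1)) (hanti j.le_succ) x₀ x⟩⟩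
  refine isOdometer_univ_of_semiconj Φ ?_ ⟨fun x y hxy => ?_, fun a => ?_⟩
    fun x => Subtype.ext (funext fun j => orbitIndex_apply hu hmin (hδ j) x₀ x)
  · exact (continuous_pi fun j =>
      (isLocallyConstant_orbitIndex hu (hδ j) x₀).continuous).subtype_mk _
  · by_contra hne
    obtain ⟨j, hj⟩ := (hlim.eventually (eventually_not_orbitChain hne)).exists
    exact hj (orbitChain_of_orbitIndex_eq hu hmin (hδ j) (congrFun (congrArg Subtype.val hxy) j))
  · obtain ⟨x, hx⟩ := exists_forall_orbitIndex_eq hu hmin hδ hanti x₀ a.2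
    exact ⟨x, Subtype.ext (funext hx)⟩

theorem isPeriodicOrbit_univ [TotallyDisconnectedSpace X] [Finite X]
    (hu : Equicontinuous fun n : ℕ => f^[n]) (hmin : IsMinimalSet f univ) :
    IsPeriodicOrbit f univ := by
  obtain ⟨x₀, -⟩ := hmin.1
  obtain ⟨δ, hsep, hδ⟩ := (((eventually_forall_orbitChain_imp_eq (f := f) finite_univ).filter_mono
    nhdsWithin_le_nhds).and (self_mem_nhdsWithin (s := Ioi (0 : ℝ)) (a := 0))).exists
  have hm := returnTime_pos hu hmin hδ x₀
  refine ⟨x₀, mem_univ _, returnTime f δ x₀, hm,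
    (hsep _ trivial _ trivial (orbitChain_iterate_returnTime hm)).symm,
    (eq_univ_of_forall fun x => ?_).symm⟩
  exact ⟨_, orbitIndex_lt_returnTime hu hmin hδ x₀ x,
    hsep _ trivial _ trivial (orbitChain_orbitIndex hu hmin hδ x₀ x)⟩

end

theorem minimal_equicontinuous_td_periodic_or_odometer_general {X : Type*} [MetricSpace X]
    [CompactSpace X] [TotallyDisconnectedSpace X]
    (f : X → X)
    (hmin : IsMinimalSet f Set.univ)
    (heq : ∀ ε > (0 : ℝ), ∃ δ > (0 : ℝ), ∀ x y : X, dist x y ≤ δ →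
      ∀ i : ℕ, dist (f^[i] x) (f^[i] y) ≤ ε) :
    IsPeriodicOrbit f Set.univ ∨ IsOdometer f Set.univ := by
  have hu : Equicontinuous fun n : ℕ => f^[n] :=
    (Metric.uniformEquicontinuous_iff.2 fun ε hε =>
      let ⟨δ, hδ, h⟩ := heq (ε / 2) (half_pos hε)
      ⟨δ, hδ, fun x y hxy n => (h x y hxy.le n).trans_lt (half_lt_self hε)⟩).equicontinuous
  rcases finite_or_infinite X with hX | hX
  · exact .inl (isPeriodicOrbit_univ hu hmin)
  · exact .inr (isOdometer_univ hu hmin)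

theorem minimal_equicontinuous_td_periodic_or_odometer {X : Type*} [MetricSpace X]
    [CompactSpace X] [TotallyDisconnectedSpace X]
    (f : X → X) (hf : Continuous f) (hbij : Function.Bijective f)
    (hmin : IsMinimalSet f Set.univ)
    (heq : ∀ ε > (0 : ℝ), ∃ δ > (0 : ℝ), ∀ x y : X, dist x y ≤ δ →
      ∀ i : ℕ, dist (f^[i] x) (f^[i] y) ≤ ε) :
    IsPeriodicOrbit f Set.univ ∨ IsOdometer f Set.univ :=
  minimal_equicontinuous_td_periodic_or_odometer_general f hmin heq
end

section
/- Let f : X → X be a continuous self-map of a compact metric space and x ∈ X. Suppose that for every ε > 0 there exists x_ε ∈ X such that ω(x_ε, f) is a periodic orbit or an odometer and limsup_{i→∞} d(f^i(x), f^i(x_ε)) ≤ ε. Then ω(x, f) is a periodic orbit or an odometer. -/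
/-!
Periodic orbits and odometers are exactly the minimal sets on which `f` is regularly recurrent
with return times that are uniform over the set. Both properties pass to `ω(x, f)` from the
approximating `ω(x_ε, f)`: every point of `ω(x, f)` is the limit of a subsequence `f^[φ j] x`, and
a further subsequence of `f^[φ j] x_ε` converges to a point of `ω(x_ε, f)` whose whole forward
orbit stays `ε`-close to that of the first one.

For the converse, let `y ∈ M` be non-periodic and choose return times `N j ∣ N (j + 1)` for
precision `1 / (j + 1)`. The `f^[N j]`-orbit closures of the points `f^[r] y` are
`f^[N j]`-minimal, hence partition `M` into finitely many clopen pieces of diameter at most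
`1 / (j + 1)`, permuted cyclically by `f`; recording which piece contains a point conjugates `f`
on `M` with an odometer.
-/

open Filter Topology Metric Set

open Function

section OrbitClosure

variable {X : Type*} [TopologicalSpace X] {g : X → X} {S M : Set X} {z : X}

def orbitClosure (g : X → X) (z : X) : Set X :=
  closure (range fun k => g^[k] z)

theorem iterate_mem_orbitClosure (g : X → X) (z : X) (k : ℕ) : g^[k] z ∈ orbitClosure g z :=
  subset_closure ⟨k, rfl⟩

theorem mem_orbitClosure_self (g : X → X) (z : X) : z ∈ orbitClosure g z :=
  iterate_mem_orbitClosure g z 0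

theorem isClosed_orbitClosure (g : X → X) (z : X) : IsClosed (orbitClosure g z) :=
  isClosed_closure

theorem orbitClosure_subset (hS : IsClosed S) (hg : MapsTo g S S) (hz : z ∈ S) :
    orbitClosure g z ⊆ S :=
  closure_minimal (range_subset_iff.2 fun k => hg.iterate k hz) hS

theorem mapsTo_orbitClosure (hg : Continuous g) (z : X) :
    MapsTo g (orbitClosure g z) (orbitClosure g z) := by
  refine MapsTo.closure (fun w => ?_) hg
  rintro ⟨k, rfl⟩
  exact ⟨k + 1, iterate_succ_apply' g k z⟩

theorem IsMinimalSet.eq_of_subset (hM : IsMinimalSet g M) (hS : S ⊆ M) (hne : S.Nonempty)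
    (hcl : IsClosed S) (hgS : MapsTo g S S) : S = M :=
  (hM.2.2.2 S hS hcl hgS).resolve_left hne.ne_empty

theorem IsMinimalSet.orbitClosure_eq (hg : Continuous g) (hM : IsMinimalSet g M) (hz : z ∈ M) :
    orbitClosure g z = M :=
  hM.eq_of_subset (orbitClosure_subset hM.2.1 hM.2.2.1 hz) ⟨z, mem_orbitClosure_self g z⟩
    (isClosed_orbitClosure g z) (mapsTo_orbitClosure hg z)

theorem isMinimalSet_of_subset_orbitClosure (hne : M.Nonempty) (hcl : IsClosed M)
    (hgM : MapsTo g M M) (hdense : ∀ z ∈ M, M ⊆ orbitClosure g z) : IsMinimalSet g M := by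
  refine ⟨hne, hcl, hgM, fun S hSM hS hgS => ?_⟩
  rcases S.eq_empty_or_nonempty with hempty | ⟨z, hz⟩
  · exact Or.inl hempty
  · exact Or.inr (hSM.antisymm ((hdense z (hSM hz)).trans (orbitClosure_subset hS hgS hz)))

end OrbitClosure

section RegularRecurrence

variable {X : Type*} [PseudoMetricSpace X] {f g : X → X} {S : Set X} {y : X}

theorem RegularlyRecurrent.iterate (hy : RegularlyRecurrent f y) (n : ℕ) :
    RegularlyRecurrent f^[n] y := by
  intro ε hε
  obtain ⟨m, hm, hret⟩ := hy ε hε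
  refine ⟨m, hm, fun k => ?_⟩
  rw [← iterate_mul, ← mul_assoc]
  exact hret (n * k)

/-- From a point `z` of `S` close to `g^[k] y`, at most `m` further steps lead to a multiple of
the return time `m` of `y`, and hence close to `y`. -/
theorem RegularlyRecurrent.mem_of_subset_orbitClosure (hg : Continuous g)
    (hy : RegularlyRecurrent g y) (hS : S ⊆ orbitClosure g y) (hne : S.Nonempty)
    (hcl : IsClosed S) (hgS : MapsTo g S S) : y ∈ S := by
  obtain ⟨z, hz⟩ := hne
  refine hcl.closure_subset (Metric.mem_closure_iff.2 fun ε hε => ?_)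
  obtain ⟨m, hm, hret⟩ := hy (ε / 2) (half_pos hε)
  have hnear : ∀ᶠ w in 𝓝 z, ∀ i ∈ Finset.range (m + 1), dist (g^[i] w) (g^[i] z) < ε / 2 :=
    (Finset.eventually_all _).2 fun i _ =>
      ((hg.iterate i).tendsto z).eventually (Metric.ball_mem_nhds _ (half_pos hε))
  obtain ⟨_, hw, ⟨k, rfl⟩⟩ := (hnear.and_frequently (mem_closure_iff_frequently.1 (hS hz))).exists
  obtain ⟨i, hi, hmul⟩ : ∃ i ≤ m, i + k = (k / m + 1) * m := by
    refine ⟨m - k % m, Nat.sub_le _ _, ?_⟩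
    have := Nat.div_add_mod' k m
    have := Nat.mod_lt k hm
    rw [add_one_mul]
    omega
  refine ⟨g^[i] z, hgS.iterate i hz, ?_⟩
  calc dist y (g^[i] z) ≤ dist y (g^[i] (g^[k] y)) + dist (g^[i] (g^[k] y)) (g^[i] z) :=
        dist_triangle _ _ _
    _ < ε / 2 + ε / 2 := by
        refine add_lt_add_of_le_of_lt ?_ (hw i (Finset.mem_range.2 (Nat.lt_succ_of_le hi)))
        rw [← iterate_add_apply, hmul]
        exact hret _
    _ = ε := add_halves ε

theorem RegularlyRecurrent.isMinimalPoint (hg : Continuous g) (hy : RegularlyRecurrent g y) :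
    IsMinimalPoint g y := by
  refine ⟨⟨y, mem_orbitClosure_self g y⟩, isClosed_orbitClosure g y, mapsTo_orbitClosure hg y,
    fun S hS hcl hgS => ?_⟩
  rcases S.eq_empty_or_nonempty with hempty | hne
  · exact Or.inl hempty
  · exact Or.inr (hS.antisymm (orbitClosure_subset hcl hgS
      (hy.mem_of_subset_orbitClosure hg hS hne hcl hgS)))

end RegularRecurrence

section UniformRecurrence

variable {X : Type*} [PseudoMetricSpace X] {f : X → X} {S : Set X}

def UniformlyRegularlyRecurrentOn (f : X → X) (S : Set X) : Prop :=
  ∀ ε > (0 : ℝ), ∃ n, 0 < n ∧ ∀ s ∈ S, ∀ k, dist s (f^[k * n] s) ≤ ε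

theorem UniformlyRegularlyRecurrentOn.regularlyRecurrent (hS : UniformlyRegularlyRecurrentOn f S)
    {s : X} (hs : s ∈ S) : RegularlyRecurrent f s :=
  fun ε hε => let ⟨n, hn, hret⟩ := hS ε hε; ⟨n, hn, hret s hs⟩

theorem UniformlyRegularlyRecurrentOn.exists_seq (hS : UniformlyRegularlyRecurrentOn f S)
    {ε : ℕ → ℝ} (hε : ∀ j, 0 < ε j) :
    ∃ N : ℕ → ℕ, (∀ j, 0 < N j) ∧ (∀ j, N j ∣ N (j + 1)) ∧
      ∀ j, ∀ s ∈ S, ∀ k, dist s (f^[k * N j] s) ≤ ε j := by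
  choose n hn hret using fun j => hS (ε j) (hε j)
  refine ⟨fun j => ∏ l ∈ Finset.range (j + 1), n l, fun j => Finset.prod_pos fun l _ => hn l,
    fun j => Finset.prod_dvd_prod_of_subset _ _ _ (Finset.range_subset_range.2 (j + 1).le_succ),
    fun j s hs k => ?_⟩
  obtain ⟨c, hc⟩ := Finset.dvd_prod_of_mem n (Finset.self_mem_range_succ j)
  show dist s (f^[k * ∏ l ∈ Finset.range (j + 1), n l] s) ≤ ε j
  rw [hc, mul_left_comm, mul_comm]
  exact hret j s hs (k * c)

end UniformRecurrence

section PeriodicOrbit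

variable {X : Type*} {f : X → X} {S M : Set X} {y : X} {i : ℕ}

theorem isClosed_setOf_iterate_lt [TopologicalSpace X] [T1Space X] (f : X → X) (y : X) (i : ℕ) :
    IsClosed {w | ∃ j < i, f^[j] y = w} :=
  ((finite_lt_nat i).image fun j => f^[j] y).isClosed

theorem IsPeriodicPt.mapsTo_setOf_iterate_lt (hy : IsPeriodicPt f i y) (hi : 0 < i) :
    MapsTo f {w | ∃ j < i, f^[j] y = w} {w | ∃ j < i, f^[j] y = w} := by
  rintro _ ⟨j, -, rfl⟩
  exact ⟨(j + 1) % i, Nat.mod_lt _ hi, by rw [hy.iterate_mod_apply, iterate_succ_apply']⟩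

theorem IsPeriodicOrbit.isMinimalSet [TopologicalSpace X] [T1Space X] (h : IsPeriodicOrbit f S) :
    IsMinimalSet f S := by
  obtain ⟨y, hyS, i, hi, hy, rfl⟩ := h
  refine isMinimalSet_of_subset_orbitClosure ⟨y, hyS⟩ (isClosed_setOf_iterate_lt f y i)
    (IsPeriodicPt.mapsTo_setOf_iterate_lt hy hi) ?_
  rintro _ ⟨j, hj, rfl⟩ _ ⟨l, -, rfl⟩
  refine subset_closure ⟨l + i - j, ?_⟩
  dsimp only
  rw [← iterate_add_apply, Nat.sub_add_cancel (by omega), iterate_add_apply, hy]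

theorem IsPeriodicOrbit.uniformlyRegularlyRecurrentOn [PseudoMetricSpace X]
    (h : IsPeriodicOrbit f S) : UniformlyRegularlyRecurrentOn f S := by
  obtain ⟨y, -, i, hi, hy, rfl⟩ := h
  intro ε hε
  refine ⟨i, hi, ?_⟩
  rintro _ ⟨j, -, rfl⟩ k
  rw [((IsPeriodicPt.apply_iterate hy j).const_mul k).eq, dist_self]
  exact hε.le

theorem IsMinimalSet.isPeriodicOrbit_of_isPeriodicPt [TopologicalSpace X] [T1Space X]
    (hM : IsMinimalSet f M) (hyM : y ∈ M) (hy : IsPeriodicPt f i y) (hi : 0 < i) :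
    IsPeriodicOrbit f M := by
  refine ⟨y, hyM, i, hi, hy, (hM.eq_of_subset (S := {w | ∃ j < i, f^[j] y = w}) ?_
    ⟨y, 0, hi, rfl⟩ (isClosed_setOf_iterate_lt f y i)
    (IsPeriodicPt.mapsTo_setOf_iterate_lt hy hi)).symm⟩
  rintro _ ⟨j, -, rfl⟩
  exact hM.2.2.1.iterate j hyM

end PeriodicOrbit

namespace PeriodicStructure

variable (p : PeriodicStructure)

instance : T2Space p.space :=
  inferInstanceAs (T2Space {x : ℕ → ℕ // ∀ j, x j < p.m j ∧ x (j + 1) % p.m j = x j})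

instance : CompactSpace p.space := by
  have hcl : IsClosed {x : ℕ → ℕ | ∀ j, x j < p.m j ∧ x (j + 1) % p.m j = x j} := by
    simp only [ofPred_forall]
    exact isClosed_iInter fun j =>
      (isClosed_discrete {q : ℕ × ℕ | q.1 < p.m j ∧ q.2 % p.m j = q.1}).preimage
        (by fun_prop : Continuous fun x : ℕ → ℕ => (x j, x (j + 1)))
  exact isCompact_iff_compactSpace.1 <| (isCompact_univ_pi fun j =>
    (Set.finite_Iio (p.m j)).isCompact).of_isClosed_subset hcl fun x hx j _ => (hx j).1

instance : Nonempty p.space :=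
  ⟨⟨fun _ => 0, fun j => ⟨p.pos j, Nat.zero_mod _⟩⟩⟩

theorem continuous_val_apply (j : ℕ) : Continuous fun z : p.space => z.1 j :=
  (continuous_apply j).comp continuous_subtype_val

theorem m_dvd_m {l j : ℕ} (h : l ≤ j) : p.m l ∣ p.m j := by
  induction j, h using Nat.le_induction with
  | base => exact dvd_rfl
  | succ j _ ih => exact ih.trans (p.dvd j)

variable {p}

theorem val_mod_m (z : p.space) {l j : ℕ} (h : l ≤ j) : z.1 j % p.m l = z.1 l := by
  induction j, h using Nat.le_induction with
  | base => exact Nat.mod_eq_of_lt (z.2 l).1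
  | succ j hj ih => rw [← Nat.mod_mod_of_dvd _ (p.m_dvd_m hj), (z.2 j).2, ih]

theorem val_eq_of_val_eq {z w : p.space} {l j : ℕ} (h : l ≤ j) (hzw : z.1 j = w.1 j) :
    z.1 l = w.1 l := by
  rw [← val_mod_m z h, hzw, val_mod_m w h]

theorem step_iterate_val (t : ℕ) (z : p.space) (j : ℕ) :
    (p.step^[t] z).1 j = (z.1 j + t) % p.m j := by
  induction t with
  | zero => exact (Nat.mod_eq_of_lt (z.2 j).1).symm
  | succ t ih =>
    rw [iterate_succ_apply']
    show ((p.step^[t] z).1 j + 1) % p.m j = _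
    rw [ih, Nat.mod_add_mod, add_assoc]

theorem exists_dist_lt_of_val_eq {Y : Type*} [PseudoMetricSpace Y] {Φ : p.space → Y}
    (hΦ : Continuous Φ) {ε : ℝ} (hε : 0 < ε) :
    ∃ J, ∀ z w : p.space, z.1 J = w.1 J → dist (Φ z) (Φ w) < ε := by
  let V : ℕ → Set (p.space × p.space) := fun J => {zw | zw.1.1 J = zw.2.1 J}
  have hV : Antitone V := antitone_nat_of_succ_le fun J _ hzw => val_eq_of_val_eq J.le_succ hzw
  have hVc : ∀ J, IsCompact (V J) := fun J =>
    (isClosed_eq ((continuous_val_apply p J).comp continuous_fst)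
      ((continuous_val_apply p J).comp continuous_snd)).isCompact
  have hU : ∀ zw ∈ ⋂ J, V J, {zw : p.space × p.space | dist (Φ zw.1) (Φ zw.2) < ε} ∈ 𝓝 zw := by
    intro zw hzw
    have hdiag : zw.1 = zw.2 := Subtype.ext (funext fun J => mem_iInter.1 hzw J)
    exact (isOpen_lt (by fun_prop) continuous_const).mem_nhds (by simp [hdiag, hε])
  obtain ⟨J, hJ⟩ := exists_subset_nhds_of_isCompact hV.directed_ge hVc hU
  exact ⟨J, fun z w hzw => hJ (show (z, w) ∈ V J from hzw)⟩

end PeriodicStructure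

section Odometer

variable {X : Type*} [MetricSpace X] {f : X → X} {S : Set X}

theorem IsOdometer.exists_semiconj (h : IsOdometer f S) :
    ∃ (p : PeriodicStructure) (Φ : p.space → X), Continuous Φ ∧ range Φ = S ∧
      Semiconj Φ p.step f := by
  obtain ⟨p, hh, hconj⟩ := h
  exact ⟨p, fun z => hh z, by fun_prop, by
    rw [range_comp' Subtype.val hh, hh.surjective.range_eq, image_univ, Subtype.range_coe],
    fun z => (hconj z).symm⟩

theorem IsOdometer.uniformlyRegularlyRecurrentOn (h : IsOdometer f S) :
    UniformlyRegularlyRecurrentOn f S := by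
  obtain ⟨p, Φ, hΦ, rfl, hsemi⟩ := h.exists_semiconj
  intro ε hε
  obtain ⟨J, hJ⟩ := PeriodicStructure.exists_dist_lt_of_val_eq hΦ hε
  refine ⟨p.m J, p.pos J, ?_⟩
  rintro _ ⟨z, rfl⟩ k
  rw [← (hsemi.iterate_right _) z]
  refine (hJ _ _ ?_).le
  rw [PeriodicStructure.step_iterate_val, Nat.add_mul_mod_self_right, Nat.mod_eq_of_lt (z.2 J).1]

theorem IsOdometer.isMinimalSet (h : IsOdometer f S) : IsMinimalSet f S := by
  obtain ⟨p, Φ, hΦ, rfl, hsemi⟩ := h.exists_semiconj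
  refine isMinimalSet_of_subset_orbitClosure (range_nonempty Φ) (isCompact_range hΦ).isClosed
    (by rintro _ ⟨z, rfl⟩; exact ⟨p.step z, hsemi z⟩) ?_
  rintro _ ⟨z, rfl⟩ _ ⟨w, rfl⟩
  refine Metric.mem_closure_iff.2 fun ε hε => ?_
  obtain ⟨J, hJ⟩ := PeriodicStructure.exists_dist_lt_of_val_eq hΦ hε
  refine ⟨_, ⟨p.m J + w.1 J - z.1 J, rfl⟩, ?_⟩
  show dist (Φ w) (f^[p.m J + w.1 J - z.1 J] (Φ z)) < ε
  rw [← (hsemi.iterate_right _) z]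
  refine hJ _ _ ?_
  have := (z.2 J).1
  rw [PeriodicStructure.step_iterate_val, show z.1 J + (p.m J + w.1 J - z.1 J) = w.1 J + p.m J
    by omega, Nat.add_mod_right, Nat.mod_eq_of_lt (w.2 J).1]

end Odometer

section Coding

variable {X : Type*} [TopologicalSpace X] {f : X → X} {M : Set X} {p : PeriodicStructure}

structure OdometerCoding (f : X → X) (M : Set X) (p : PeriodicStructure) where
  code : ℕ → X → ℕ
  continuousOn_code : ∀ j, ContinuousOn (code j) M
  code_lt : ∀ j, ∀ z ∈ M, code j z < p.m j
  code_succ_mod : ∀ j, ∀ z ∈ M, code (j + 1) z % p.m j = code j z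
  code_apply : ∀ j, ∀ z ∈ M, code j (f z) = (code j z + 1) % p.m j
  eq_of_code_eq : ∀ z ∈ M, ∀ w ∈ M, (∀ j, code j z = code j w) → z = w

namespace OdometerCoding

theorem code_iterate (C : OdometerCoding f M p) (hfM : MapsTo f M M) (j t : ℕ) {z : X}
    (hz : z ∈ M) : C.code j (f^[t] z) = (C.code j z + t) % p.m j := by
  induction t with
  | zero => exact (Nat.mod_eq_of_lt (C.code_lt j z hz)).symm
  | succ t ih =>
    rw [iterate_succ_apply', C.code_apply j _ (hfM.iterate t hz), ih, Nat.mod_add_mod, add_assoc]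

theorem exists_code_eq [T2Space X] (C : OdometerCoding f M p) (hM : IsCompact M)
    (hne : M.Nonempty) (hfM : MapsTo f M M) (a : p.space) : ∃ z ∈ M, ∀ j, C.code j z = a.1 j := by
  let V : ℕ → Set X := fun j => M ∩ C.code j ⁻¹' {a.1 j}
  have hVcl : ∀ j, IsClosed (V j) := fun j =>
    (C.continuousOn_code j).preimage_isClosed_of_isClosed hM.isClosed (isClosed_discrete _)
  have hVanti : ∀ j, V (j + 1) ⊆ V j := by
    rintro j z ⟨hz, hza⟩
    refine ⟨hz, ?_⟩
    rw [mem_preimage, mem_singleton_iff] at hza ⊢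
    rw [← C.code_succ_mod j z hz, hza, (a.2 j).2]
  have hVne : ∀ j, (V j).Nonempty := by
    intro j
    obtain ⟨z, hz⟩ := hne
    refine ⟨f^[p.m j - C.code j z + a.1 j] z, hfM.iterate _ hz, ?_⟩
    have := C.code_lt j z hz
    rw [mem_preimage, mem_singleton_iff, C.code_iterate hfM j _ hz,
      show C.code j z + (p.m j - C.code j z + a.1 j) = a.1 j + p.m j by omega,
      Nat.add_mod_right, Nat.mod_eq_of_lt (a.2 j).1]
  obtain ⟨z, hz⟩ := IsCompact.nonempty_iInter_of_sequence_nonempty_isCompact_isClosed V hVanti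
    hVne (hM.of_isClosed_subset (hVcl 0) inter_subset_left) hVcl
  exact ⟨z, (mem_iInter.1 hz 0).1, fun j => (mem_iInter.1 hz j).2⟩

theorem isOdometer [T2Space X] (C : OdometerCoding f M p) (hM : IsCompact M)
    (hne : M.Nonempty) (hfM : MapsTo f M M) : IsOdometer f M := by
  let Q : M → p.space := fun z =>
    ⟨fun j => C.code j z, fun j => ⟨C.code_lt j z z.2, C.code_succ_mod j z z.2⟩⟩
  have hQinj : Injective Q := fun z w hzw =>
    Subtype.ext (C.eq_of_code_eq z z.2 w w.2 fun j => congrFun (congrArg Subtype.val hzw) j)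
  have hQsurj : Surjective Q := fun a =>
    let ⟨z, hz, hza⟩ := C.exists_code_eq hM hne hfM a
    ⟨⟨z, hz⟩, Subtype.ext (funext hza)⟩
  have : CompactSpace M := isCompact_iff_compactSpace.1 hM
  let e : M ≃ₜ p.space := Continuous.homeoOfEquivCompactToT2
    (f := Equiv.ofBijective Q ⟨hQinj, hQsurj⟩)
    (Continuous.subtype_mk (continuous_pi fun j => (C.continuousOn_code j).domRestrict) _)
  refine ⟨p, e.symm, fun z => congrArg Subtype.val (?_ : (⟨_, hfM (e.symm z).2⟩ : M) = _)⟩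
  refine hQinj (Subtype.ext (funext fun j => ?_))
  show C.code j (f (e.symm z)) = (e (e.symm (p.step z))).1 j
  rw [e.apply_symm_apply, C.code_apply j _ (e.symm z).2]
  show ((e (e.symm z)).1 j + 1) % p.m j = _
  rw [e.apply_symm_apply]
  rfl

end OdometerCoding

end Coding

section OmegaLimit

variable {X : Type*} [TopologicalSpace X] {f : X → X}

theorem mapsTo_omegaLimitPt (hf : Continuous f) (x : X) :
    MapsTo f (omegaLimitPt f x) (omegaLimitPt f x) := by
  rintro y ⟨φ, hφ, hy⟩
  refine ⟨fun j => φ j + 1, hφ.add_const 1, ?_⟩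
  simpa only [iterate_succ_apply', comp_def] using (hf.tendsto y).comp hy

variable [FirstCountableTopology X]

theorem mem_omegaLimitSeq_iff {u : ℕ → X} {y : X} :
    y ∈ omegaLimitSeq u ↔ MapClusterPt y atTop u :=
  ⟨fun ⟨_, hφ, hy⟩ => hy.mapClusterPt.of_comp hφ.tendsto_atTop, MapClusterPt.tendsto_subseq⟩

theorem isClosed_omegaLimitSeq (u : ℕ → X) : IsClosed (omegaLimitSeq u) := by
  have h : omegaLimitSeq u = {y | MapClusterPt y atTop u} := Set.ext fun _ => mem_omegaLimitSeq_iff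
  exact h ▸ isClosed_setOfPred_clusterPt

theorem nonempty_omegaLimitSeq [CompactSpace X] (u : ℕ → X) : (omegaLimitSeq u).Nonempty :=
  let ⟨y, hy⟩ := exists_clusterPt_of_compactSpace (map u atTop)
  ⟨y, mem_omegaLimitSeq_iff.2 hy⟩

end OmegaLimit

section Approximation

variable {X : Type*} [MetricSpace X] [CompactSpace X] {f : X → X} {x : X}

theorem eventually_dist_le_of_limsup_dist_lt {u v : ℕ → X} {ε : ℝ}
    (h : limsup (fun i => dist (u i) (v i)) atTop < ε) : ∀ᶠ i in atTop, dist (u i) (v i) ≤ ε := by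
  obtain ⟨C, hC⟩ := Metric.isBounded_iff.1 (isCompact_univ (X := X)).isBounded
  exact (eventually_lt_of_limsup_lt h (isBoundedUnder_of ⟨C, fun i =>
    hC (mem_univ (u i)) (mem_univ (v i))⟩)).mono fun _ => le_of_lt

theorem exists_mem_omegaLimitPt_forall_dist_iterate_le (hf : Continuous f) {x' u : X} {ε : ℝ}
    (hclose : ∀ᶠ i in atTop, dist (f^[i] x) (f^[i] x') ≤ ε) (hu : u ∈ omegaLimitPt f x) :
    ∃ v ∈ omegaLimitPt f x', ∀ t, dist (f^[t] u) (f^[t] v) ≤ ε := by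
  obtain ⟨φ, hφ, hxu⟩ := hu
  obtain ⟨v, ψ, hψ, hx'v⟩ := CompactSpace.tendsto_subseq fun j => f^[φ j] x'
  refine ⟨v, ⟨φ ∘ ψ, hφ.comp hψ, hx'v⟩, fun t => ?_⟩
  have hlim : Tendsto (fun j => dist (f^[t] (f^[φ (ψ j)] x)) (f^[t] (f^[φ (ψ j)] x'))) atTop
      (𝓝 (dist (f^[t] u) (f^[t] v))) :=
    (((hf.iterate t).tendsto u).comp (hxu.comp hψ.tendsto_atTop)).dist
      (((hf.iterate t).tendsto v).comp hx'v)
  refine le_of_tendsto hlim ?_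
  have hmono : Tendsto (fun j => t + φ (ψ j)) atTop atTop :=
    tendsto_atTop_mono (fun _ => le_add_self) (hφ.comp hψ).tendsto_atTop
  filter_upwards [hmono.eventually hclose] with j hj
  simpa only [← iterate_add_apply] using hj

theorem uniformlyRegularlyRecurrentOn_omegaLimitPt_of_approx (hf : Continuous f)
    (happrox : ∀ ε > (0 : ℝ), ∃ x', UniformlyRegularlyRecurrentOn f (omegaLimitPt f x') ∧
      ∀ᶠ i in atTop, dist (f^[i] x) (f^[i] x') ≤ ε) :
    UniformlyRegularlyRecurrentOn f (omegaLimitPt f x) := by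
  intro ε hε
  obtain ⟨x', hR, hclose⟩ := happrox (ε / 3) (by positivity)
  obtain ⟨n, hn, hret⟩ := hR (ε / 3) (by positivity)
  refine ⟨n, hn, fun u hu k => ?_⟩
  obtain ⟨v, hv, huv⟩ := exists_mem_omegaLimitPt_forall_dist_iterate_le hf hclose hu
  calc dist u (f^[k * n] u)
      ≤ dist u v + dist v (f^[k * n] v) + dist (f^[k * n] v) (f^[k * n] u) :=
        dist_triangle4 _ _ _ _
    _ ≤ ε / 3 + ε / 3 + ε / 3 :=
        add_le_add_three (huv 0) (hret v hv k) (dist_comm (f^[k * n] v) _ ▸ huv (k * n))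
    _ = ε := add_thirds ε

theorem isMinimalSet_omegaLimitPt_of_approx (hf : Continuous f)
    (happrox : ∀ ε > (0 : ℝ), ∃ x', IsMinimalSet f (omegaLimitPt f x') ∧
      ∀ᶠ i in atTop, dist (f^[i] x) (f^[i] x') ≤ ε) :
    IsMinimalSet f (omegaLimitPt f x) := by
  refine isMinimalSet_of_subset_orbitClosure (nonempty_omegaLimitSeq _) (isClosed_omegaLimitSeq _)
    (mapsTo_omegaLimitPt hf x) fun z hz u hu => Metric.mem_closure_iff.2 fun ε hε => ?_
  obtain ⟨x', hM, hclose⟩ := happrox (ε / 4) (by positivity)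
  obtain ⟨vz, hvz, hzvz⟩ := exists_mem_omegaLimitPt_forall_dist_iterate_le hf hclose hz
  obtain ⟨vu, hvu, huvu⟩ := exists_mem_omegaLimitPt_forall_dist_iterate_le hf hclose hu
  obtain ⟨_, ⟨t, rfl⟩, ht⟩ := Metric.mem_closure_iff.1
    ((hM.orbitClosure_eq hf hvz).ge hvu) (ε / 4) (by positivity)
  refine ⟨f^[t] z, ⟨t, rfl⟩, ?_⟩
  calc dist u (f^[t] z) ≤ dist u vu + dist vu (f^[t] vz) + dist (f^[t] vz) (f^[t] z) :=
        dist_triangle4 _ _ _ _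
    _ ≤ ε / 4 + ε / 4 + ε / 4 :=
        add_le_add_three (huvu 0) ht.le (dist_comm (f^[t] z) _ ▸ hzvz t)
    _ < ε := by linarith

end Approximation

section CyclicDecomposition

variable {X : Type*} [MetricSpace X] {f g : X → X} {y z w : X} {n : ℕ}

/-- When `f` is uniformly regularly recurrent on the orbit closure of `y`, the sets
`cycleSet f n y r` are `f^[n]`-minimal and cyclically permuted by `f` with period
`cyclePeriod f n y`; `cycleIndex f n y z` is the position `r < cyclePeriod f n y` of the one
containing `z`. -/
def cycleSet (f : X → X) (n : ℕ) (y : X) (r : ℕ) : Set X :=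
  orbitClosure f^[n] (f^[r] y)

noncomputable def cyclePeriod (f : X → X) (n : ℕ) (y : X) : ℕ :=
  minimalPeriod (image f) (cycleSet f n y 0)

noncomputable def cycleIndex (f : X → X) (n : ℕ) (y z : X) : ℕ :=
  sInf {r | z ∈ cycleSet f n y r}

theorem self_mem_cycleSet (f : X → X) (n : ℕ) (y : X) (r : ℕ) : f^[r] y ∈ cycleSet f n y r :=
  mem_orbitClosure_self _ _

theorem cycleSet_subset_orbitClosure (hf : Continuous f) (n : ℕ) (y : X) (r : ℕ) :
    cycleSet f n y r ⊆ orbitClosure f y :=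
  orbitClosure_subset (isClosed_orbitClosure f y) ((mapsTo_orbitClosure hf y).iterate n)
    (iterate_mem_orbitClosure f y r)

theorem isMinimalSet_cycleSet (hf : Continuous f)
    (hR : UniformlyRegularlyRecurrentOn f (orbitClosure f y)) (r : ℕ) :
    IsMinimalSet f^[n] (cycleSet f n y r) :=
  ((hR.regularlyRecurrent (iterate_mem_orbitClosure f y r)).iterate n).isMinimalPoint
    (hf.iterate n)

theorem cycleSet_eq_of_mem (hf : Continuous f)
    (hR : UniformlyRegularlyRecurrentOn f (orbitClosure f y)) {a b : ℕ}
    (hza : z ∈ cycleSet f n y a) (hzb : z ∈ cycleSet f n y b) :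
    cycleSet f n y a = cycleSet f n y b :=
  ((isMinimalSet_cycleSet hf hR a).orbitClosure_eq (hf.iterate n) hza).symm.trans
    ((isMinimalSet_cycleSet hf hR b).orbitClosure_eq (hf.iterate n) hzb)

theorem cycleSet_subset_cycleSet_of_dvd {n' : ℕ} (h : n ∣ n') (r : ℕ) :
    cycleSet f n' y r ⊆ cycleSet f n y r := by
  obtain ⟨c, rfl⟩ := h
  refine closure_mono (range_subset_iff.2 fun k => ⟨c * k, ?_⟩)
  simp only [← iterate_mul, mul_assoc]

theorem dist_le_of_mem_cycleSet (hf : Continuous f)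
    (hR : UniformlyRegularlyRecurrentOn f (orbitClosure f y)) {ε : ℝ}
    (hε : ∀ s ∈ orbitClosure f y, ∀ k, dist s (f^[k * n] s) ≤ ε) {r : ℕ}
    (hz : z ∈ cycleSet f n y r) (hw : w ∈ cycleSet f n y r) : dist z w ≤ ε := by
  rw [← (isMinimalSet_cycleSet hf hR r).orbitClosure_eq (hf.iterate n) hz] at hw
  refine dist_comm z w ▸ closure_minimal (range_subset_iff.2 fun k => ?_) isClosed_closedBall hw
  rw [mem_closedBall, dist_comm, ← iterate_mul, mul_comm]
  exact hε z (cycleSet_subset_orbitClosure hf n y r hz) k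

variable [CompactSpace X]

theorem image_orbitClosure (hf : Continuous f) (hfg : Function.Commute f g) (z : X) :
    f '' orbitClosure g z = orbitClosure g (f z) := by
  rw [orbitClosure, image_closure_of_isCompact isClosed_closure.isCompact hf.continuousOn,
    ← range_comp]
  exact congrArg closure (congrArg range (funext fun k => (hfg.iterate_right k).eq z))

theorem image_cycleSet (hf : Continuous f) (r : ℕ) :
    f '' cycleSet f n y r = cycleSet f n y (r + 1) := by
  rw [cycleSet, image_orbitClosure hf (Commute.self_iterate f n), ← iterate_succ_apply' f]
  rfl

theorem image_iterate_cycleSet (hf : Continuous f) (r : ℕ) :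
    (image f)^[r] (cycleSet f n y 0) = cycleSet f n y r := by
  induction r with
  | zero => rfl
  | succ r ih => rw [iterate_succ_apply', ih, image_cycleSet hf]

theorem cyclePeriod_pos (hf : Continuous f)
    (hR : UniformlyRegularlyRecurrentOn f (orbitClosure f y)) (hn : 0 < n) :
    0 < cyclePeriod f n y := by
  refine IsPeriodicPt.minimalPeriod_pos hn ?_
  show (image f)^[n] _ = _
  rw [image_iterate_cycleSet hf]
  refine cycleSet_eq_of_mem hf hR (self_mem_cycleSet f n y n) ?_
  show f^[n] y ∈ orbitClosure f^[n] y
  simpa only [iterate_one] using iterate_mem_orbitClosure f^[n] y 1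

theorem cycleSet_eq_cycleSet_iff (hf : Continuous f)
    (hR : UniformlyRegularlyRecurrentOn f (orbitClosure f y)) (hn : 0 < n) {a b : ℕ} :
    cycleSet f n y a = cycleSet f n y b ↔ a % cyclePeriod f n y = b % cyclePeriod f n y := by
  have hp := cyclePeriod_pos hf hR hn
  rw [← image_iterate_cycleSet hf a, ← image_iterate_cycleSet hf b,
    ← iterate_mod_minimalPeriod_eq (n := a), ← iterate_mod_minimalPeriod_eq (n := b)]
  exact iterate_eq_iterate_iff_of_lt_minimalPeriod (Nat.mod_lt _ hp) (Nat.mod_lt _ hp)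

theorem cycleSet_mod_cyclePeriod (hf : Continuous f)
    (hR : UniformlyRegularlyRecurrentOn f (orbitClosure f y)) (hn : 0 < n) (r : ℕ) :
    cycleSet f n y (r % cyclePeriod f n y) = cycleSet f n y r :=
  (cycleSet_eq_cycleSet_iff hf hR hn).2 (Nat.mod_mod _ _)

theorem exists_mem_cycleSet (hf : Continuous f)
    (hR : UniformlyRegularlyRecurrentOn f (orbitClosure f y)) (hn : 0 < n)
    (hz : z ∈ orbitClosure f y) : ∃ r, z ∈ cycleSet f n y r := by
  have hcl : IsClosed (⋃ r ∈ Iio (cyclePeriod f n y), cycleSet f n y r) :=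
    (finite_Iio _).isClosed_biUnion fun r _ => isClosed_orbitClosure _ _
  have hcover := closure_minimal (range_subset_iff.2 fun t => mem_biUnion
    (Nat.mod_lt t (cyclePeriod_pos hf hR hn))
    ((cycleSet_mod_cyclePeriod hf hR hn t).symm ▸ self_mem_cycleSet f n y t)) hcl hz
  obtain ⟨r, -, hr⟩ := mem_iUnion₂.1 hcover
  exact ⟨r, hr⟩

theorem cycleIndex_mem (hf : Continuous f)
    (hR : UniformlyRegularlyRecurrentOn f (orbitClosure f y)) (hn : 0 < n)
    (hz : z ∈ orbitClosure f y) : z ∈ cycleSet f n y (cycleIndex f n y z) :=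
  Nat.sInf_mem (exists_mem_cycleSet hf hR hn hz)

theorem cycleIndex_lt (hf : Continuous f)
    (hR : UniformlyRegularlyRecurrentOn f (orbitClosure f y)) (hn : 0 < n)
    (hz : z ∈ orbitClosure f y) : cycleIndex f n y z < cyclePeriod f n y := by
  refine (Nat.sInf_le ?_).trans_lt (Nat.mod_lt (cycleIndex f n y z) (cyclePeriod_pos hf hR hn))
  show z ∈ cycleSet f n y _
  rw [cycleSet_mod_cyclePeriod hf hR hn]
  exact cycleIndex_mem hf hR hn hz

theorem mem_cycleSet_iff (hf : Continuous f)
    (hR : UniformlyRegularlyRecurrentOn f (orbitClosure f y)) (hn : 0 < n)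
    (hz : z ∈ orbitClosure f y) {a : ℕ} :
    z ∈ cycleSet f n y a ↔ a % cyclePeriod f n y = cycleIndex f n y z := by
  have hc := cycleIndex_mem hf hR hn hz
  have hmod := Nat.mod_eq_of_lt (cycleIndex_lt hf hR hn hz)
  constructor
  · intro ha
    rw [← hmod]
    exact (cycleSet_eq_cycleSet_iff hf hR hn).1 (cycleSet_eq_of_mem hf hR ha hc)
  · intro ha
    rwa [(cycleSet_eq_cycleSet_iff hf hR hn).2 (ha.trans hmod.symm)]

theorem cycleIndex_apply (hf : Continuous f)
    (hR : UniformlyRegularlyRecurrentOn f (orbitClosure f y)) (hn : 0 < n)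
    (hz : z ∈ orbitClosure f y) :
    cycleIndex f n y (f z) = (cycleIndex f n y z + 1) % cyclePeriod f n y := by
  refine ((mem_cycleSet_iff hf hR hn (mapsTo_orbitClosure hf y hz)).1 ?_).symm
  rw [← image_cycleSet hf]
  exact mem_image_of_mem f (cycleIndex_mem hf hR hn hz)

theorem cycleIndex_mod_cyclePeriod_of_dvd (hf : Continuous f)
    (hR : UniformlyRegularlyRecurrentOn f (orbitClosure f y)) {n' : ℕ} (h : n ∣ n')
    (hn' : 0 < n') (hz : z ∈ orbitClosure f y) :
    cycleIndex f n' y z % cyclePeriod f n y = cycleIndex f n y z :=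
  (mem_cycleSet_iff hf hR (Nat.pos_of_dvd_of_pos h hn') hz).1
    (cycleSet_subset_cycleSet_of_dvd h _ (cycleIndex_mem hf hR hn' hz))

theorem cyclePeriod_dvd_cyclePeriod_of_dvd (hf : Continuous f)
    (hR : UniformlyRegularlyRecurrentOn f (orbitClosure f y)) {n' : ℕ} (h : n ∣ n')
    (hn' : 0 < n') : cyclePeriod f n y ∣ cyclePeriod f n' y := by
  have hn := Nat.pos_of_dvd_of_pos h hn'
  have hy : y ∈ cycleSet f n' y (cyclePeriod f n' y) := by
    rw [← cycleSet_mod_cyclePeriod hf hR hn', Nat.mod_self]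
    exact self_mem_cycleSet f n' y 0
  have hmod := (cycleSet_eq_cycleSet_iff hf hR hn).1 <| cycleSet_eq_of_mem hf hR
    (cycleSet_subset_cycleSet_of_dvd h _ hy) (self_mem_cycleSet f n y 0)
  exact Nat.dvd_of_mod_eq_zero (hmod.trans (Nat.zero_mod _))

theorem dist_iterate_le_of_cyclePeriod_dvd (hf : Continuous f)
    (hR : UniformlyRegularlyRecurrentOn f (orbitClosure f y)) (hn : 0 < n) {ε : ℝ}
    (hε : ∀ s ∈ orbitClosure f y, ∀ k, dist s (f^[k * n] s) ≤ ε) {a : ℕ}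
    (h : cyclePeriod f n y ∣ a) : dist y (f^[a] y) ≤ ε := by
  have hy : y ∈ cycleSet f n y a := by
    rw [← cycleSet_mod_cyclePeriod hf hR hn, Nat.mod_eq_zero_of_dvd h]
    exact self_mem_cycleSet f n y 0
  exact dist_le_of_mem_cycleSet hf hR hε hy (self_mem_cycleSet f n y a)

theorem continuousOn_cycleIndex (hf : Continuous f)
    (hR : UniformlyRegularlyRecurrentOn f (orbitClosure f y)) (hn : 0 < n) :
    ContinuousOn (cycleIndex f n y) (orbitClosure f y) := by
  refine continuousOn_iff_isClosed.2 fun t _ => ⟨⋃ r ∈ t ∩ Iio (cyclePeriod f n y),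
    cycleSet f n y r, ((finite_Iio _).subset inter_subset_right).isClosed_biUnion fun r _ =>
    isClosed_orbitClosure _ _, ?_⟩
  ext z
  simp only [mem_inter_iff, mem_preimage, mem_iUnion₂, mem_Iio, exists_prop]
  constructor
  · rintro ⟨hzt, hz⟩
    exact ⟨⟨_, ⟨hzt, cycleIndex_lt hf hR hn hz⟩, cycleIndex_mem hf hR hn hz⟩, hz⟩
  · rintro ⟨⟨r, ⟨hrt, hrp⟩, hzr⟩, hz⟩
    rw [← (mem_cycleSet_iff hf hR hn hz).1 hzr, Nat.mod_eq_of_lt hrp]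
    exact ⟨hrt, hz⟩

end CyclicDecomposition

section Classification

variable {X : Type*} [MetricSpace X] [CompactSpace X] {f : X → X} {M : Set X} {y : X}

theorem tendsto_cyclePeriod_atTop (hf : Continuous f)
    (hR : UniformlyRegularlyRecurrentOn f (orbitClosure f y)) (hy : y ∉ periodicPts f)
    {N : ℕ → ℕ} (hN : ∀ j, 0 < N j) (hNdvd : ∀ j, N j ∣ N (j + 1))
    (hNret : ∀ j, ∀ s ∈ orbitClosure f y, ∀ k, dist s (f^[k * N j] s) ≤ 1 / ((j : ℝ) + 1)) :
    Tendsto (fun j => cyclePeriod f (N j) y) atTop atTop := by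
  refine tendsto_atTop_atTop_of_monotone (monotone_nat_of_le_succ fun j => Nat.le_of_dvd
    (cyclePeriod_pos hf hR (hN _)) (cyclePeriod_dvd_cyclePeriod_of_dvd hf hR (hNdvd j) (hN _)))
    fun b => ?_
  by_contra! hb
  -- every `cyclePeriod f (N j) y` divides `b!`, so `f^[b!] y` is `1 / (j + 1)`-close to `y`
  refine hy ⟨b.factorial, b.factorial_pos, (eq_of_forall_dist_le fun ε hε => ?_).symm⟩
  obtain ⟨j, hj⟩ := exists_nat_one_div_lt hε
  exact (dist_iterate_le_of_cyclePeriod_dvd hf hR (hN j) (hNret j)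
    (Nat.dvd_factorial (cyclePeriod_pos hf hR (hN j)) (hb j).le)).trans hj.le

theorem isOdometer_orbitClosure (hf : Continuous f)
    (hR : UniformlyRegularlyRecurrentOn f (orbitClosure f y)) (hy : y ∉ periodicPts f) :
    IsOdometer f (orbitClosure f y) := by
  obtain ⟨N, hN, hNdvd, hNret⟩ :=
    hR.exists_seq (ε := fun j => 1 / ((j : ℝ) + 1)) fun _ => Nat.one_div_pos_of_nat
  let p : PeriodicStructure := ⟨fun j => cyclePeriod f (N j) y,
    fun j => cyclePeriod_pos hf hR (hN j),
    fun j => cyclePeriod_dvd_cyclePeriod_of_dvd hf hR (hNdvd j) (hN _),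
    tendsto_cyclePeriod_atTop hf hR hy hN hNdvd hNret⟩
  let C : OdometerCoding f (orbitClosure f y) p :=
    { code := fun j => cycleIndex f (N j) y
      continuousOn_code := fun j => continuousOn_cycleIndex hf hR (hN j)
      code_lt := fun j _ => cycleIndex_lt hf hR (hN j)
      code_succ_mod := fun j _ => cycleIndex_mod_cyclePeriod_of_dvd hf hR (hNdvd j) (hN _)
      code_apply := fun j _ => cycleIndex_apply hf hR (hN j)
      eq_of_code_eq := fun z hz w hw hzw => eq_of_forall_dist_le fun ε hε => by
        obtain ⟨j, hj⟩ := exists_nat_one_div_lt hε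
        have hzj := cycleIndex_mem hf hR (hN j) hz
        rw [hzw j] at hzj
        exact (dist_le_of_mem_cycleSet hf hR (hNret j) hzj
          (cycleIndex_mem hf hR (hN j) hw)).trans hj.le }
  exact C.isOdometer (isClosed_orbitClosure f y).isCompact ⟨y, mem_orbitClosure_self f y⟩
    (mapsTo_orbitClosure hf y)

theorem IsMinimalSet.isPeriodicOrbit_or_isOdometer (hf : Continuous f) (hM : IsMinimalSet f M)
    (hR : UniformlyRegularlyRecurrentOn f M) : IsPeriodicOrbit f M ∨ IsOdometer f M := by
  obtain ⟨y, hyM⟩ := hM.1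
  by_cases hy : y ∈ periodicPts f
  · obtain ⟨n, hn, hyn⟩ := hy
    exact Or.inl (hM.isPeriodicOrbit_of_isPeriodicPt hyM hyn hn)
  · rw [← hM.orbitClosure_eq hf hyM] at hR ⊢
    exact Or.inr (isOdometer_orbitClosure hf hR hy)

end Classification

theorem omegaLimit_periodic_or_odometer_of_approx {X : Type*} [MetricSpace X]
    [CompactSpace X] (f : X → X) (hf : Continuous f) (x : X)
    (h : ∀ ε > (0 : ℝ), ∃ xe : X,
      (IsPeriodicOrbit f (omegaLimitPt f xe) ∨ IsOdometer f (omegaLimitPt f xe)) ∧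
      Filter.limsup (fun i => dist (f^[i] x) (f^[i] xe)) Filter.atTop ≤ ε) :
    IsPeriodicOrbit f (omegaLimitPt f x) ∨ IsOdometer f (omegaLimitPt f x) := by
  have happrox : ∀ ε > (0 : ℝ), ∃ x',
      (IsPeriodicOrbit f (omegaLimitPt f x') ∨ IsOdometer f (omegaLimitPt f x')) ∧
      ∀ᶠ i in atTop, dist (f^[i] x) (f^[i] x') ≤ ε := fun ε hε =>
    let ⟨x', hx', hlim⟩ := h (ε / 2) (half_pos hε)
    ⟨x', hx', eventually_dist_le_of_limsup_dist_lt (hlim.trans_lt (half_lt_self hε))⟩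
  refine IsMinimalSet.isPeriodicOrbit_or_isOdometer hf
    (isMinimalSet_omegaLimitPt_of_approx hf fun ε hε => ?_)
    (uniformlyRegularlyRecurrentOn_omegaLimitPt_of_approx hf fun ε hε => ?_)
  · obtain ⟨x', hx' | hx', hclose⟩ := happrox ε hε
    exacts [⟨x', hx'.isMinimalSet, hclose⟩, ⟨x', hx'.isMinimalSet, hclose⟩]
  · obtain ⟨x', hx' | hx', hclose⟩ := happrox ε hε
    exacts [⟨x', hx'.uniformlyRegularlyRecurrentOn, hclose⟩,
      ⟨x', hx'.uniformlyRegularlyRecurrentOn, hclose⟩]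
end
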